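/- arXiv:quant-ph/0308142 — 5 statements merged into one kernel-verified Lean document; each statement's English description precedes it below -/
import Mathlib

section
/- Let d = p be a prime and let u = (j,k) ∈ Z_p × Z_p with u ≠ (0,0). Then the matrices P_u(r) for 0 ≤ r < p form a complete set of mutually orthogonal rank-one projections: (1) P_u(r) · P_u(s) = P_u(r) if r = s and = 0 if r ≠ s; (2) each P_u(r) is Hermitian, (P_u(r))† = P_u(r); (3) Tr P_u(r) = 1; and (4) Σ_{r=0}^{p−1} P_u(r) equals the p×p identity matrix. -/
open Matrix

/-- `eta d = exp(2πi/d)`, the primitive `d`-th root of unity. -/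
noncomputable def eta (d : ℕ) : ℂ := Complex.exp (2 * Real.pi * Complex.I / d)

/-- The generalized spin matrix `S_{j,k}`, with `(S_{j,k})_{m,n} = η^{mj}` if `n = m + k`
(mod `d`) and `0` otherwise, exponents computed with representatives `0 ≤ m, j < d`. -/
noncomputable def spin (d : ℕ) [NeZero d] (j k : ZMod d) :
    Matrix (ZMod d) (ZMod d) ℂ :=
  Matrix.of fun m n => if n = m + k then eta d ^ (m.val * j.val) else 0

/-- The phase `α_u`: `-exp(πi/d)` if `d` is even and both indices are odd, else `1`. -/
noncomputable def alpha (d : ℕ) [NeZero d] (u : ZMod d × ZMod d) : ℂ :=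
  if Even d ∧ Odd u.1.val ∧ Odd u.2.val then -Complex.exp (Real.pi * Complex.I / d) else 1

/-- The projection `P_u(r) = (1/d) Σ_{m=0}^{d-1} (α_u η^r S_u)^m`. -/
noncomputable def proj (d : ℕ) [NeZero d] (u : ZMod d × ZMod d) (r : ZMod d) :
    Matrix (ZMod d) (ZMod d) ℂ :=
  (d : ℂ)⁻¹ • ∑ m ∈ Finset.range d, ((alpha d u * eta d ^ r.val) • spin d u.1 u.2) ^ m

/-!
Put `A = α_u S_u`. From `S_{j,k} S_{j',k'} = η^{k j'} S_{j+j',k+k'}` one gets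
`A^d = α_u^d η^{(d choose 2) k j} • 1`, and `α_u` is precisely the phase that makes this scalar `1`;
`A` is also unitary. If `B^d = 1`, the average `P = d⁻¹ Σ_{m<d} B^m` satisfies `B P = P`, and
`P_u(r)` is this average for `B = η^r A`. Hence `A` acts on the range of `P_u(s)` as `η^{-s}`, so
`P_u(r) P_u(s)` is `P_u(s)` times the average of the powers of `η^{r-s}`, which vanishes unless
`r = s`. For unitary `B`, `B P = P` gives `P^* B = P^*`, hence `P^* = P^* P`, which is
self-adjoint. Summing over `r` leaves only the term `A^0 = 1`. For `d = p` prime every `m u` with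
`0 < m < p` is a nonzero index, whose spin matrix is traceless, so `tr P_u(r) = p⁻¹ tr 1 = 1`.
-/

open Finset

section CyclicAverage

variable (K : Type*) {A : Type*} [Field K] [Ring A] [Algebra K A]

noncomputable def cyclicAverage (d : ℕ) (B : A) : A := (d : K)⁻¹ • ∑ m ∈ range d, B ^ m

variable {K} {d : ℕ}

lemma geom_sum_eq_zero_of_pow_eq_one {c : K} (hc : c ^ d = 1) (hc1 : c ≠ 1) :
    ∑ i ∈ range d, c ^ i = 0 := by
  rw [geom_sum_eq hc1, hc, sub_self, zero_div]

lemma cyclicAverage_eq_zero_of_pow_eq_one {c : K} (hc : c ^ d = 1) (hc1 : c ≠ 1) :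
    cyclicAverage K d c = 0 := by
  rw [cyclicAverage, geom_sum_eq_zero_of_pow_eq_one hc hc1, smul_zero]

lemma cyclicAverage_one (hd : (d : K) ≠ 0) : cyclicAverage K d (1 : A) = 1 := by
  simp [cyclicAverage, ← Nat.cast_smul_eq_nsmul K, smul_smul, hd]

lemma mul_cyclicAverage_of_pow_eq_one {B : A} (hB : B ^ d = 1) :
    B * cyclicAverage K d B = cyclicAverage K d B := by
  have h := mul_geom_sum B d
  rw [hB, sub_self, sub_mul, one_mul, sub_eq_zero] at h
  rw [cyclicAverage, mul_smul_comm, h]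

lemma cyclicAverage_mul_of_mul_eq_smul {B Q : A} {c : K} (h : B * Q = c • Q) :
    cyclicAverage K d B * Q = cyclicAverage K d c • Q := by
  have hpow (m : ℕ) : B ^ m * Q = c ^ m • Q := by
    induction m with
    | zero => simp
    | succ m ih => rw [pow_succ', mul_assoc, ih, mul_smul_comm, h, smul_smul, pow_succ]
  simp only [cyclicAverage, smul_mul_assoc, sum_mul, hpow, smul_eq_mul, mul_smul, sum_smul]

lemma mul_cyclicAverage_of_mul_eq_self {B Q : A} (h : Q * B = Q) (hd : (d : K) ≠ 0) :
    Q * cyclicAverage K d B = Q := by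
  have hpow (m : ℕ) : Q * B ^ m = Q := by
    induction m with
    | zero => rw [pow_zero, mul_one]
    | succ m ih => rw [pow_succ, ← mul_assoc, ih, h]
  simp [cyclicAverage, mul_sum, hpow, ← Nat.cast_smul_eq_nsmul K, smul_smul, hd]

lemma cyclicAverage_mul_self {B : A} (hB : B ^ d = 1) (hd : (d : K) ≠ 0) :
    cyclicAverage K d B * cyclicAverage K d B = cyclicAverage K d B := by
  rw [cyclicAverage_mul_of_mul_eq_smul (c := (1 : K))
    (by rw [one_smul, mul_cyclicAverage_of_pow_eq_one hB]), cyclicAverage_one hd, one_smul]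

lemma cyclicAverage_smul_mul_cyclicAverage_smul_of_ne {B : A} {w z : K} (hB : B ^ d = 1)
    (hw : w ^ d = 1) (hz : z ^ d = 1) (hwz : w ≠ z) :
    cyclicAverage K d (w • B) * cyclicAverage K d (z • B) = 0 := by
  rcases Nat.eq_zero_or_pos d with rfl | hd
  · simp [cyclicAverage]
  have hz0 : z ≠ 0 := by
    rintro rfl
    rw [zero_pow hd.ne'] at hz
    exact zero_ne_one hz
  have hzB : (w • B) * cyclicAverage K d (z • B) = (w / z) • cyclicAverage K d (z • B) := by
    rw [← div_mul_cancel₀ w hz0, ← smul_smul, smul_mul_assoc,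
      mul_cyclicAverage_of_pow_eq_one (by rw [smul_pow, hz, hB, one_smul]), div_mul_cancel₀ w hz0]
  rw [cyclicAverage_mul_of_mul_eq_smul hzB, cyclicAverage_eq_zero_of_pow_eq_one
    (by rw [div_pow, hw, hz, div_one]) (by rwa [Ne, div_eq_one_iff_eq hz0]), zero_smul]

lemma sum_cyclicAverage_pow_smul {ζ : K} (hζ : IsPrimitiveRoot ζ d) (hd : (d : K) ≠ 0)
    (B : A) : ∑ r ∈ range d, cyclicAverage K d (ζ ^ r • B) = 1 := by
  have hsum : ∑ r ∈ range d, cyclicAverage K d (ζ ^ r • B)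
      = ∑ m ∈ range d, cyclicAverage K d (ζ ^ m) • B ^ m := by
    simp only [cyclicAverage, smul_pow, ← pow_mul, ← smul_sum]
    rw [sum_comm]
    simp only [smul_assoc, sum_smul, mul_comm, smul_sum]
  have hd0 : 0 < d := Nat.pos_of_ne_zero (by rintro rfl; exact hd Nat.cast_zero)
  rw [hsum, sum_eq_single_of_mem 0 (mem_range.mpr hd0)]
  · rw [pow_zero, pow_zero, cyclicAverage_one hd, one_smul]
  · intro m hm hm0
    rw [cyclicAverage_eq_zero_of_pow_eq_one
      (by rw [pow_right_comm, hζ.pow_eq_one, one_pow])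
      (hζ.pow_ne_one_of_pos_of_lt hm0 (mem_range.mp hm)), zero_smul]

lemma star_cyclicAverage [StarRing A] {B : A} (hB : B ^ d = 1) (hBu : star B * B = 1)
    (hd : (d : K) ≠ 0) : star (cyclicAverage K d B) = cyclicAverage K d B := by
  have hBP : star B * cyclicAverage K d B = cyclicAverage K d B := by
    calc star B * cyclicAverage K d B = star B * (B * cyclicAverage K d B) := by
          rw [mul_cyclicAverage_of_pow_eq_one hB]
      _ = cyclicAverage K d B := by rw [← mul_assoc, hBu, one_mul]
  have hPB : star (cyclicAverage K d B) * B = star (cyclicAverage K d B) := by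
    simpa only [star_mul, star_star] using congrArg star hBP
  have hPP := mul_cyclicAverage_of_mul_eq_self hPB hd
  calc star (cyclicAverage K d B)
      = star (cyclicAverage K d B) * cyclicAverage K d B := hPP.symm
    _ = star (star (cyclicAverage K d B) * cyclicAverage K d B) := by rw [star_mul, star_star]
    _ = cyclicAverage K d B := by rw [hPP, star_star]

lemma trace_cyclicAverage {n : Type*} [Fintype n] [DecidableEq n] {B : Matrix n n K}
    (hB : ∀ m, 0 < m → m < d → trace (B ^ m) = 0) :
    trace (cyclicAverage K d B) = Fintype.card n / d := by
  rcases Nat.eq_zero_or_pos d with rfl | hd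
  · simp [cyclicAverage]
  rw [cyclicAverage, trace_smul, trace_sum, sum_eq_single_of_mem 0 (mem_range.mpr hd)]
  · rw [pow_zero, trace_one, smul_eq_mul, inv_mul_eq_div]
  · exact fun m hm hm0 => hB m (Nat.pos_of_ne_zero hm0) (mem_range.mp hm)

end CyclicAverage

namespace ZMod

lemma sum_val_eq_sum_range {d : ℕ} [NeZero d] {M : Type*} [AddCommMonoid M] (f : ℕ → M) :
    ∑ x : ZMod d, f x.val = ∑ i ∈ range d, f i := by
  obtain ⟨n, rfl⟩ := Nat.exists_eq_succ_of_ne_zero (NeZero.ne d)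
  exact Fin.sum_univ_eq_sum_range f (n + 1)

lemma even_val_mul_iff {d : ℕ} (hd : Even d) (a b : ZMod d) :
    Even (a * b).val ↔ Even (a.val * b.val) := by
  rw [val_mul, Nat.even_iff, Nat.even_iff, Nat.mod_mod_of_dvd _ (even_iff_two_dvd.mp hd)]

lemma nsmul_ne_zero_of_lt {p : ℕ} [Fact p.Prime] {M : Type*} [AddCommGroup M]
    [Module (ZMod p) M] {x : M} (hx : x ≠ 0) {m : ℕ} (hm0 : 0 < m) (hmp : m < p) :
    m • x ≠ 0 := by
  rw [← Nat.cast_smul_eq_nsmul (ZMod p), smul_ne_zero_iff, Ne, natCast_eq_zero_iff]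
  exact ⟨Nat.not_dvd_of_pos_of_lt hm0 hmp, hx⟩

end ZMod

section Spin

variable {d : ℕ} [NeZero d]

variable (d) in
lemma eta_isPrimitiveRoot : IsPrimitiveRoot (eta d) d := by
  simpa [eta] using Complex.isPrimitiveRoot_exp d (NeZero.ne d)

lemma eta_pow_pow_self (n : ℕ) : (eta d ^ n) ^ d = 1 := by
  rw [pow_right_comm, (eta_isPrimitiveRoot d).pow_eq_one, one_pow]

lemma eta_pow_eq_eta_pow {a b : ℕ} (h : (a : ZMod d) = b) : eta d ^ a = eta d ^ b := by
  have hη := eta_isPrimitiveRoot d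
  rwa [(hη.isOfFinOrder (NeZero.ne d)).pow_eq_pow_iff_modEq, ← hη.eq_orderOf,
    ← ZMod.natCast_eq_natCast_iff]

lemma eta_pow_val_mul_val (a b : ZMod d) : eta d ^ (a.val * b.val) = eta d ^ (a * b).val :=
  eta_pow_eq_eta_pow (by simp)

lemma eta_mem_unitary : eta d ∈ unitary ℂ := by
  rw [Unitary.mem_iff_star_mul_self, Complex.star_def, Complex.conj_mul',
    (eta_isPrimitiveRoot d).norm'_eq_one (NeZero.ne d)]
  norm_num

lemma eta_pow_val_injective : Function.Injective fun r : ZMod d => eta d ^ r.val :=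
  fun _ _ h => ZMod.val_injective d
    ((eta_isPrimitiveRoot d).pow_inj (ZMod.val_lt _) (ZMod.val_lt _) h)

lemma eta_pow_choose_two : eta d ^ d.choose 2 = (-1) ^ (d - 1) := by
  have hd : (d : ℂ) ≠ 0 := NeZero.ne _
  rw [eta, ← Complex.exp_nat_mul, ← Complex.exp_pi_mul_I, ← Complex.exp_nat_mul,
    Nat.cast_choose_two, Nat.cast_sub NeZero.one_le]
  congr 1
  field_simp
  push_cast
  ring

lemma spin_apply (j k m n : ZMod d) :
    spin d j k m n = if n = m + k then eta d ^ (m * j).val else 0 := by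
  rw [spin, of_apply, eta_pow_val_mul_val]

lemma spin_mul_spin (j k j' k' : ZMod d) :
    spin d j k * spin d j' k' = eta d ^ (k * j').val • spin d (j + j') (k + k') := by
  ext m n
  rw [mul_apply, sum_eq_single (m + k), Matrix.smul_apply, spin_apply, spin_apply, spin_apply,
    if_pos rfl, add_assoc]
  · split_ifs
    · rw [smul_eq_mul, ← pow_add, ← pow_add]
      exact eta_pow_eq_eta_pow (by simp; ring)
    · rw [mul_zero, smul_zero]
  · intro l _ hl
    rw [spin_apply, if_neg hl, zero_mul]
  · exact fun h => absurd (mem_univ _) h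

lemma spin_zero_zero : spin d 0 0 = 1 := by
  ext m n
  rw [spin_apply, one_apply, add_zero, mul_zero, ZMod.val_zero, pow_zero]
  exact if_congr eq_comm rfl rfl

lemma spin_pow (j k : ZMod d) (m : ℕ) :
    spin d j k ^ m = eta d ^ (m.choose 2 * (k * j).val) • spin d (m • j) (m • k) := by
  induction m with
  | zero => simp [spin_zero_zero]
  | succ m ih =>
    rw [pow_succ, ih, smul_mul_assoc, spin_mul_spin, smul_smul, ← pow_add, succ_nsmul,
      succ_nsmul]
    congr 1
    exact eta_pow_eq_eta_pow (by simp [Nat.choose_succ_succ']; ring)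

lemma spin_mem_unitaryGroup (j k : ZMod d) : spin d j k ∈ unitaryGroup (ZMod d) ℂ := by
  rw [mem_unitaryGroup_iff', star_eq_conjTranspose]
  ext m n
  rw [mul_apply, sum_eq_single (m - k), one_apply]
  · simp only [conjTranspose_apply, spin_apply, sub_add_cancel, if_true]
    rcases eq_or_ne m n with rfl | h
    · rw [if_pos rfl, if_pos rfl, Unitary.star_mul_self_of_mem (pow_mem eta_mem_unitary _)]
    · rw [if_neg h.symm, if_neg h, mul_zero]
  · intro l _ hl
    rw [conjTranspose_apply, spin_apply, if_neg (fun h => hl (by rw [h, add_sub_cancel_right])),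
      star_zero, zero_mul]
  · exact fun h => absurd (mem_univ _) h

lemma trace_spin_eq_zero {j k : ZMod d} (h : (j, k) ≠ 0) : trace (spin d j k) = 0 := by
  simp only [trace, Matrix.diag, spin_apply, left_eq_add]
  rcases eq_or_ne k 0 with rfl | hk
  · have hj : j ≠ 0 := fun hj => h (by rw [hj]; rfl)
    have hη := eta_isPrimitiveRoot d
    simp only [↓reduceIte]
    calc ∑ m : ZMod d, eta d ^ (m * j).val = ∑ m : ZMod d, (eta d ^ j.val) ^ m.val := by
          refine sum_congr rfl fun m _ => ?_
          rw [← pow_mul, mul_comm j.val, eta_pow_val_mul_val]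
      _ = 0 := by
          rw [ZMod.sum_val_eq_sum_range (fun i => (eta d ^ j.val) ^ i)]
          exact geom_sum_eq_zero_of_pow_eq_one (eta_pow_pow_self _)
            (hη.pow_ne_one_of_pos_of_lt ((ZMod.val_ne_zero j).mpr hj) (ZMod.val_lt j))
  · simp [hk]

lemma alpha_mem_unitary (u : ZMod d × ZMod d) : alpha d u ∈ unitary ℂ := by
  rw [Unitary.mem_iff_star_mul_self, Complex.star_def, Complex.conj_mul', alpha]
  split_ifs
  · rw [norm_neg, show Real.pi * Complex.I / d = (Real.pi / d : ℝ) * Complex.I by push_cast; ring,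
      Complex.norm_exp_ofReal_mul_I]
    norm_num
  · norm_num

lemma alpha_pow_mul_eta_pow_choose_two (u : ZMod d × ZMod d) :
    alpha d u ^ d * eta d ^ (d.choose 2 * (u.2 * u.1).val) = 1 := by
  rw [pow_mul, eta_pow_choose_two, ← pow_mul, alpha]
  split_ifs with h
  · obtain ⟨hd, hj, hk⟩ := h
    have hodd : Odd ((d - 1) * (u.2 * u.1).val) := by
      refine (Nat.Even.sub_odd NeZero.one_le hd odd_one).mul (Nat.not_even_iff_odd.mp ?_)
      rw [ZMod.even_val_mul_iff hd, Nat.not_even_iff_odd]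
      exact hk.mul hj
    rw [hodd.neg_one_pow, neg_pow, hd.neg_one_pow, one_mul, ← Complex.exp_nat_mul,
      mul_div_cancel₀ _ (NeZero.ne (d : ℂ)), Complex.exp_pi_mul_I]
    norm_num
  · rw [one_pow, one_mul]
    apply Even.neg_one_pow
    rcases Nat.even_or_odd d with hd | hd
    · refine Even.mul_left ((ZMod.even_val_mul_iff hd _ _).mpr (Nat.even_mul.mpr ?_)) _
      simp only [← Nat.not_odd_iff_even]
      tauto
    · exact (Nat.Odd.sub_odd hd odd_one).mul_right _

lemma alpha_smul_spin_pow_self (u : ZMod d × ZMod d) :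
    (alpha d u • spin d u.1 u.2) ^ d = 1 := by
  rw [smul_pow, spin_pow, smul_smul, alpha_pow_mul_eta_pow_choose_two, one_smul, nsmul_eq_mul,
    nsmul_eq_mul, ZMod.natCast_self, zero_mul, zero_mul, spin_zero_zero]

lemma trace_alpha_smul_spin_pow {u : ZMod d × ZMod d} {m : ℕ} (hm : m • u ≠ 0) :
    trace ((alpha d u • spin d u.1 u.2) ^ m) = 0 := by
  rw [smul_pow, spin_pow, smul_smul, trace_smul,
    trace_spin_eq_zero (j := m • u.1) (k := m • u.2) hm, smul_zero]

lemma alpha_smul_spin_mem_unitary (u : ZMod d × ZMod d) :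
    alpha d u • spin d u.1 u.2 ∈ unitary (Matrix (ZMod d) (ZMod d) ℂ) :=
  Unitary.smul_mem_of_mem (alpha_mem_unitary u) (spin_mem_unitaryGroup _ _)

end Spin

section Proj

variable {d : ℕ} [NeZero d] (u : ZMod d × ZMod d)

lemma proj_eq_cyclicAverage (r : ZMod d) :
    proj d u r = cyclicAverage ℂ d (eta d ^ r.val • (alpha d u • spin d u.1 u.2)) := by
  rw [proj, mul_comm, ← smul_smul]
  rfl

lemma eta_pow_smul_alpha_smul_spin_pow_self (n : ℕ) :
    (eta d ^ n • (alpha d u • spin d u.1 u.2)) ^ d = 1 := by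
  rw [smul_pow, eta_pow_pow_self, one_smul, alpha_smul_spin_pow_self]

lemma proj_mul_proj (r s : ZMod d) :
    proj d u r * proj d u s = if r = s then proj d u r else 0 := by
  rw [proj_eq_cyclicAverage, proj_eq_cyclicAverage]
  split_ifs with hrs
  · rw [hrs, cyclicAverage_mul_self (eta_pow_smul_alpha_smul_spin_pow_self u _)
      (NeZero.ne (d : ℂ))]
  · exact cyclicAverage_smul_mul_cyclicAverage_smul_of_ne (alpha_smul_spin_pow_self u)
      (eta_pow_pow_self _) (eta_pow_pow_self _) (eta_pow_val_injective.ne hrs)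

lemma conjTranspose_proj (r : ZMod d) : (proj d u r)ᴴ = proj d u r := by
  have hunit := Unitary.smul_mem_of_mem (pow_mem (eta_mem_unitary (d := d)) r.val)
    (alpha_smul_spin_mem_unitary u)
  rw [proj_eq_cyclicAverage, ← star_eq_conjTranspose,
    star_cyclicAverage (eta_pow_smul_alpha_smul_spin_pow_self u _)
      (Unitary.star_mul_self_of_mem hunit) (NeZero.ne (d : ℂ))]

lemma sum_proj : ∑ r : ZMod d, proj d u r = 1 := by
  simp only [proj_eq_cyclicAverage]
  rw [ZMod.sum_val_eq_sum_range (fun i => cyclicAverage ℂ d (eta d ^ i • _)),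
    sum_cyclicAverage_pow_smul (eta_isPrimitiveRoot d) (NeZero.ne (d : ℂ))]

end Proj

lemma trace_proj {p : ℕ} [Fact p.Prime] {u : ZMod p × ZMod p} (hu : u ≠ 0) (r : ZMod p) :
    trace (proj p u r) = 1 := by
  rw [proj_eq_cyclicAverage, trace_cyclicAverage, ZMod.card,
    div_self (NeZero.ne (p : ℂ))]
  intro m hm0 hmp
  rw [smul_pow, trace_smul, trace_alpha_smul_spin_pow (ZMod.nsmul_ne_zero_of_lt hu hm0 hmp),
    smul_zero]

theorem proj_complete_orthogonal (p : ℕ) [Fact p.Prime]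
    (u : ZMod p × ZMod p) (hu : u ≠ 0) :
    (∀ r s : ZMod p, proj p u r * proj p u s = if r = s then proj p u r else 0) ∧
    (∀ r : ZMod p, (proj p u r)ᴴ = proj p u r) ∧
    (∀ r : ZMod p, Matrix.trace (proj p u r) = 1) ∧
    (∑ r : ZMod p, proj p u r = 1) :=
  ⟨proj_mul_proj u, conjTranspose_proj u, trace_proj hu, sum_proj u⟩
end

section
/- Let p be a prime and let a ≠ a' in Z_p. Then for all r, s ∈ Z_p, Tr[P_{(1,a)}(r) · P_{(1,a')}(s)] = 1/p. Moreover, for every a ∈ Z_p and all r, s ∈ Z_p, Tr[P_{(1,a)}(r) · P_{(0,1)}(s)] = 1/p. -/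
open Matrix

/-!
Every power `(c • S_u)^m` is a clock-shift matrix, supported on one shifted diagonal with
character-valued entries; such matrices are closed under products, exponents adding up, and
their trace vanishes unless both exponents do, by orthogonality of the characters of `ZMod d`.
Expanding `Tr[P_u(r) P_v(s)]` as a double sum over `m, n < d`, linear independence of `u` and `v`
leaves only the term `m = n = 0`, so the trace is `d / d² = 1 / d`.
-/

/-- `c` times the product of the clock matrix `diag (ψ (t * x))` and the shift by `k`. -/
def clockShift {R K : Type*} [CommRing R] [DecidableEq R] [CommRing K] (ψ : AddChar R K)
    (c : K) (t k : R) : Matrix R R K :=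
  of fun x y => if y = x + k then c * ψ (t * x) else 0

section ClockShift

variable {R K : Type*} [CommRing R] [DecidableEq R] [CommRing K] (ψ : AddChar R K)

theorem clockShift_one : clockShift ψ 1 0 0 = 1 := by
  ext x y
  simp [clockShift, one_apply, eq_comm]

theorem smul_clockShift (a c : K) (t k : R) :
    a • clockShift ψ c t k = clockShift ψ (a * c) t k := by
  ext x y
  simp [clockShift, mul_assoc]

variable [Fintype R]

theorem clockShift_mul (c c' : K) (t t' k k' : R) :
    clockShift ψ c t k * clockShift ψ c' t' k' =
      clockShift ψ (c * c' * ψ (t' * k)) (t + t') (k + k') := by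
  ext x y
  rw [mul_apply, Finset.sum_eq_single (x + k) (fun z _ hz => by simp [clockShift, hz])
    (by simp)]
  simp only [clockShift, of_apply, if_true, ← add_assoc]
  split_ifs
  · simp only [mul_add, add_mul, AddChar.map_add_eq_mul]
    ring
  · simp

theorem exists_clockShift_pow (c : K) (t k : R) (m : ℕ) :
    ∃ γ, clockShift ψ c t k ^ m = clockShift ψ γ (m • t) (m • k) := by
  induction m with
  | zero => exact ⟨1, by simp [clockShift_one]⟩
  | succ m ih =>
    obtain ⟨γ, hγ⟩ := ih
    exact ⟨_, by rw [pow_succ, hγ, clockShift_mul, succ_nsmul, succ_nsmul]⟩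

theorem trace_clockShift [IsDomain K] (hψ : ψ.IsPrimitive) (c : K) (t k : R) :
    trace (clockShift ψ c t k) = if t = 0 ∧ k = 0 then c * Fintype.card R else 0 := by
  by_cases hk : k = 0
  · simp only [trace, diag, clockShift, of_apply, hk, add_zero, if_true, ← Finset.mul_sum,
      mul_comm t, AddChar.sum_mulShift t hψ, and_true]
    split_ifs <;> simp
  · simp [trace, clockShift, hk]

end ClockShift

theorem eta_pow (d : ℕ) [NeZero d] (n : ℕ) : eta d ^ n = ZMod.stdAddChar (n : ZMod d) := by
  rw [eta, ← Complex.exp_nat_mul, ZMod.stdAddChar_apply, ZMod.toCircle_natCast]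
  ring_nf

theorem spin_eq_clockShift (d : ℕ) [NeZero d] (j k : ZMod d) :
    spin d j k = clockShift ZMod.stdAddChar 1 j k := by
  ext x y
  simp [spin, clockShift, eta_pow, mul_comm j]

theorem eq_zero_of_nsmul_add_nsmul_eq_zero_of_lt {d : ℕ} {u v : ZMod d × ZMod d}
    (huv : LinearIndependent (ZMod d) ![u, v]) {m n : ℕ} (hm : m < d) (hn : n < d)
    (h : m • u + n • v = 0) : m = 0 ∧ n = 0 := by
  simp only [← Nat.cast_smul_eq_nsmul (ZMod d)] at h
  obtain ⟨hm0, hn0⟩ := LinearIndependent.pair_iff.mp huv _ _ h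
  exact ⟨by simpa [ZMod.val_cast_of_lt hm] using congrArg ZMod.val hm0,
    by simpa [ZMod.val_cast_of_lt hn] using congrArg ZMod.val hn0⟩

theorem trace_smul_spin_pow_mul_smul_spin_pow {d : ℕ} [NeZero d] {u v : ZMod d × ZMod d}
    (huv : LinearIndependent (ZMod d) ![u, v]) (a b : ℂ) {m n : ℕ} (hm : m < d) (hn : n < d) :
    trace ((a • spin d u.1 u.2) ^ m * (b • spin d v.1 v.2) ^ n) =
      if m = 0 ∧ n = 0 then (d : ℂ) else 0 := by
  split_ifs with hmn
  · simp [hmn.1, hmn.2]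
  obtain ⟨γ, hγ⟩ := exists_clockShift_pow ZMod.stdAddChar a u.1 u.2 m
  obtain ⟨δ, hδ⟩ := exists_clockShift_pow ZMod.stdAddChar b v.1 v.2 n
  simp only [spin_eq_clockShift, smul_clockShift, mul_one, hγ, hδ, clockShift_mul,
    trace_clockShift _ (ZMod.isPrimitive_stdAddChar d)]
  refine if_neg fun h => hmn (eq_zero_of_nsmul_add_nsmul_eq_zero_of_lt huv hm hn ?_)
  exact Prod.ext h.1 h.2

theorem trace_proj_mul_proj_of_linearIndependent {d : ℕ} [NeZero d] {u v : ZMod d × ZMod d}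
    (huv : LinearIndependent (ZMod d) ![u, v]) (r s : ZMod d) :
    trace (proj d u r * proj d v s) = 1 / d := by
  have hd : (d : ℂ) ≠ 0 := NeZero.ne _
  simp only [proj, smul_mul_smul, Finset.sum_mul_sum, trace_smul, trace_sum]
  rw [Finset.sum_congr rfl fun m hm => Finset.sum_congr rfl fun n hn =>
    trace_smul_spin_pow_mul_smul_spin_pow huv _ _ (Finset.mem_range.mp hm)
      (Finset.mem_range.mp hn)]
  simp only [ite_and, Finset.sum_ite_irrel, Finset.sum_ite_eq', Finset.mem_range, NeZero.pos d,
    if_true, Finset.sum_const_zero, smul_eq_mul, one_div]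
  field_simp

theorem linearIndependent_one_one {K : Type*} [Field K] {a a' : K} (h : a ≠ a') :
    LinearIndependent K ![((1 : K), a), (1, a')] := by
  refine LinearIndependent.pair_iff.mpr fun s t hst => ?_
  obtain ⟨h1, h2⟩ := Prod.ext_iff.mp hst
  simp only [Prod.smul_mk, smul_eq_mul, mul_one, Prod.mk_add_mk, Prod.fst_zero,
    Prod.snd_zero] at h1 h2
  have hs : s * (a - a') = 0 := by linear_combination h2 - a' * h1
  have hs0 : s = 0 := (mul_eq_zero.mp hs).resolve_right (sub_ne_zero.mpr h)
  exact ⟨hs0, by linear_combination h1 - hs0⟩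

theorem linearIndependent_one_zero {K : Type*} [Field K] (a : K) :
    LinearIndependent K ![((1 : K), a), (0, 1)] := by
  refine LinearIndependent.pair_iff.mpr fun s t hst => ?_
  obtain ⟨h1, h2⟩ := Prod.ext_iff.mp hst
  simp only [Prod.smul_mk, smul_eq_mul, mul_one, mul_zero, add_zero, Prod.mk_add_mk,
    Prod.fst_zero, Prod.snd_zero] at h1 h2
  subst h1
  simpa using h2

theorem trace_proj_mul_proj (p : ℕ) [Fact p.Prime] :
    (∀ a a' : ZMod p, a ≠ a' → ∀ r s : ZMod p,
      Matrix.trace (proj p (1, a) r * proj p (1, a') s) = 1 / p) ∧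
    (∀ a : ZMod p, ∀ r s : ZMod p,
      Matrix.trace (proj p (1, a) r * proj p (0, 1) s) = 1 / p) :=
  ⟨fun _ _ h => trace_proj_mul_proj_of_linearIndependent (linearIndependent_one_one h),
    fun a => trace_proj_mul_proj_of_linearIndependent (linearIndependent_one_zero a)⟩
end

section
/- For every prime p there exists a complete set of p+1 mutually unbiased orthonormal bases of ℂ^p: there are p+1 orthonormal bases B_0, …, B_p of the Hilbert space ℂ^p such that for any two vectors v ∈ B_r and w ∈ B_s with r ≠ s, |⟨v, w⟩|² = 1/p. -/
/-!
Take the standard basis together with the `p` chirp bases `v_{a,b}(k) = p^{-1/2} ζ^{a k (k+p) + 2 b k}`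
(`a` fixed, `b` ranging over `Fin p`, `ζ` a primitive `2p`-th root of unity). Chirp vectors have
entries of modulus `p^{-1/2}`, so they are unbiased to the standard basis. The inner product of two
chirp vectors is `p⁻¹` times a quadratic Gauss sum `S = ∑_k ζ^{c k (k+p) + 2 d k}` with `c = a' - a`:
for `c = 0` this is a geometric sum, giving orthonormality, and for `p ∤ c` the substitution
`k ↦ l + m` turns `|S|²` into `∑_m ζ^{c m (m+p) + 2 d m} ∑_l (ζ²)^{c m l} = p`, since only `m = 0`
survives.
-/

open Finset Function ComplexConjugate

theorem Function.Periodic.sum_range_comp_add {M : Type*} [AddCommMonoid M] {f : ℕ → M} {p : ℕ}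
    (hf : Periodic f p) (l : ℕ) : ∑ k ∈ range p, f (l + k) = ∑ k ∈ range p, f k := by
  have hIco := sum_Ico_eq_sum_range f l (l + p)
  rw [add_tsub_cancel_left] at hIco
  rw [← hIco, Finset.sum, Finset.sum, range_val, ← Nat.multiset_Ico_map_mod l p, Multiset.map_map]
  exact congrArg Multiset.sum (Multiset.map_congr rfl fun k _ => (hf.map_mod_nat k).symm)

theorem IsPrimitiveRoot.geom_sum_zpow {K : Type*} [Field K] {ω : K} {p : ℕ}
    (hω : IsPrimitiveRoot ω p) (c : ℤ) :
    ∑ k ∈ range p, (ω ^ c) ^ k = if (p : ℤ) ∣ c then (p : K) else 0 := by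
  split_ifs with hc
  · simp [(hω.zpow_eq_one_iff_dvd c).mpr hc]
  · rw [geom_sum_eq ((hω.zpow_eq_one_iff_dvd c).not.mpr hc), ← zpow_natCast, ← zpow_mul,
      mul_comm, zpow_mul, hω.zpow_eq_one, one_zpow, sub_self, zero_div]

theorem Complex.conj_zpow_of_norm_eq_one {z : ℂ} (hz : ‖z‖ = 1) (n : ℤ) :
    conj (z ^ n) = z ^ (-n) := by
  rw [zpow_neg, ← Complex.inv_eq_conj (by rw [norm_zpow, hz, one_zpow])]

theorem Fin.natCast_dvd_val_sub_val_iff {p : ℕ} {a b : Fin p} :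
    (p : ℤ) ∣ (b : ℤ) - a ↔ a = b := by
  refine ⟨fun h => ?_, fun h => by simp [h]⟩
  have := Int.eq_zero_of_abs_lt_dvd h (by rw [abs_lt]; omega)
  ext; omega

/-- Using `k (k + p)` rather than `k²` makes `ζ ^ chirpExp p a b k` `p`-periodic in `k` when
`ζ ^ (2 * p) = 1`, for odd and even `p` alike. -/
def chirpExp (p : ℕ) (a b : ℤ) (k : ℕ) : ℤ := a * k * (k + p) + 2 * b * k

variable {ζ : ℂ} {p : ℕ}

theorem chirpExp_sub (a b a' b' : ℤ) (k : ℕ) :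
    chirpExp p a' b' k - chirpExp p a b k = chirpExp p (a' - a) (b' - b) k := by
  unfold chirpExp; ring

@[simp] theorem chirpExp_zero_left (b : ℤ) (k : ℕ) : chirpExp p 0 b k = 2 * (b * k) := by
  unfold chirpExp; ring

theorem chirpExp_add (a b : ℤ) (l m : ℕ) :
    chirpExp p a b (l + m) = chirpExp p a b l + chirpExp p a b m + 2 * (a * l * m) := by
  unfold chirpExp; push_cast; ring

theorem chirpExp_add_period (a b : ℤ) (k : ℕ) :
    chirpExp p a b (k + p) = chirpExp p a b k + ↑(2 * p) * (a * (k + p) + b) := by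
  unfold chirpExp; push_cast; ring

theorem IsPrimitiveRoot.periodic_zpow_chirpExp (hζ : IsPrimitiveRoot ζ (2 * p)) (hp : 0 < p)
    (a b : ℤ) : Periodic (fun k => ζ ^ chirpExp p a b k) p := fun k => by
  simp only [chirpExp_add_period, zpow_add₀ (hζ.ne_zero (by omega)), zpow_mul, hζ.zpow_eq_one,
    one_zpow, mul_one]

theorem IsPrimitiveRoot.norm_sq_sum_zpow_chirpExp (hζ : IsPrimitiveRoot ζ (2 * p)) (hp : p.Prime)
    {c : ℤ} (hc : ¬ (p : ℤ) ∣ c) (d : ℤ) :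
    ‖∑ k ∈ range p, ζ ^ chirpExp p c d k‖ ^ 2 = p := by
  set S := ∑ k ∈ range p, ζ ^ chirpExp p c d k with hS
  have h2p : 2 * p ≠ 0 := by have := hp.pos; omega
  have hζ0 : ζ ≠ 0 := hζ.ne_zero h2p
  have hζ1 : ‖ζ‖ = 1 := hζ.norm'_eq_one h2p
  have hω : IsPrimitiveRoot (ζ ^ 2) p := hζ.pow (Nat.pos_of_ne_zero h2p) rfl
  have hshift (l : ℕ) : conj (ζ ^ chirpExp p c d l) * S =
      ∑ m ∈ range p, ζ ^ chirpExp p c d m * ((ζ ^ 2) ^ (c * m)) ^ l := by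
    rw [hS, ← (hζ.periodic_zpow_chirpExp hp.pos c d).sum_range_comp_add l, mul_sum]
    refine sum_congr rfl fun m _ => ?_
    rw [Complex.conj_zpow_of_norm_eq_one hζ1, ← zpow_natCast ((ζ ^ 2) ^ (c * m)) l, ← zpow_mul,
      ← zpow_natCast ζ 2, ← zpow_mul, ← zpow_add₀ hζ0, ← zpow_add₀ hζ0, chirpExp_add]
    congr 1; push_cast; ring
  have hsum : (‖S‖ ^ 2 : ℂ) = p := calc
    (‖S‖ ^ 2 : ℂ) = ∑ l ∈ range p, conj (ζ ^ chirpExp p c d l) * S := by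
      rw [← Complex.conj_mul', map_sum, sum_mul]
    _ = ∑ m ∈ range p, ζ ^ chirpExp p c d m * ∑ l ∈ range p, ((ζ ^ 2) ^ (c * m)) ^ l := by
      simp_rw [hshift, mul_sum]
      exact sum_comm
    _ = ∑ m ∈ range p, ζ ^ chirpExp p c d m * if (p : ℤ) ∣ c * m then (p : ℂ) else 0 := by
      simp_rw [hω.geom_sum_zpow]
    _ = p := by
      rw [sum_eq_single_of_mem 0 (mem_range.mpr hp.pos)]
      · simp [chirpExp]
      · intro m hm hm0
        have hpm : ¬ (p : ℤ) ∣ m := Int.natCast_dvd_natCast.not.mpr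
          (Nat.not_dvd_of_pos_of_lt (Nat.pos_of_ne_zero hm0) (mem_range.mp hm))
        rw [if_neg ((Nat.prime_iff_prime_int.mp hp).not_dvd_mul hc hpm), mul_zero]
  exact_mod_cast hsum

noncomputable def chirpVec (ζ : ℂ) (p : ℕ) (a b : ℤ) : EuclideanSpace ℂ (Fin p) :=
  WithLp.toLp 2 fun k => ((√p : ℝ) : ℂ)⁻¹ * ζ ^ chirpExp p a b k

theorem norm_chirpVec_apply (hζ : ‖ζ‖ = 1) (a b : ℤ) (k : Fin p) :
    ‖chirpVec ζ p a b k‖ = (√p)⁻¹ := by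
  simp [chirpVec, norm_zpow, hζ]

theorem inner_chirpVec (hζ : ‖ζ‖ = 1) (a b a' b' : ℤ) :
    inner ℂ (chirpVec ζ p a b) (chirpVec ζ p a' b') =
      (p : ℂ)⁻¹ * ∑ k ∈ range p, ζ ^ chirpExp p (a' - a) (b' - b) k := by
  have hsqrt : ((√p : ℝ) : ℂ)⁻¹ * ((√p : ℝ) : ℂ)⁻¹ = (p : ℂ)⁻¹ := by
    rw [← mul_inv, ← Complex.ofReal_mul, Real.mul_self_sqrt (Nat.cast_nonneg p)]; push_cast; rfl
  rw [PiLp.inner_apply, mul_sum, ← Fin.sum_univ_eq_sum_range]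
  refine sum_congr rfl fun k _ => ?_
  simp only [chirpVec, PiLp.toLp_apply, RCLike.inner_apply, map_mul, map_inv₀, Complex.conj_ofReal,
    Complex.conj_zpow_of_norm_eq_one hζ]
  rw [mul_mul_mul_comm, hsqrt, ← zpow_add₀ (norm_ne_zero_iff.mp (by simp [hζ])), ← sub_eq_add_neg,
    chirpExp_sub]

theorem IsPrimitiveRoot.orthonormal_chirpVec (hζ : IsPrimitiveRoot ζ (2 * p)) (a : ℤ) :
    Orthonormal ℂ fun b : Fin p => chirpVec ζ p a b := by
  rw [orthonormal_iff_ite]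
  intro b b'
  have hp := b.pos
  have hω : IsPrimitiveRoot (ζ ^ 2) p := hζ.pow (by omega) rfl
  simp_rw [inner_chirpVec (hζ.norm'_eq_one (by omega)), sub_self, chirpExp_zero_left,
    zpow_mul, zpow_natCast, zpow_ofNat, hω.geom_sum_zpow, Fin.natCast_dvd_val_sub_val_iff]
  split_ifs
  · exact inv_mul_cancel₀ (by exact_mod_cast hp.ne')
  · exact mul_zero _

theorem IsPrimitiveRoot.norm_inner_chirpVec_sq (hζ : IsPrimitiveRoot ζ (2 * p)) (hp : p.Prime)
    {a a' : ℤ} (ha : ¬ (p : ℤ) ∣ a' - a) (b b' : ℤ) :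
    ‖inner ℂ (chirpVec ζ p a b) (chirpVec ζ p a' b')‖ ^ 2 = 1 / p := by
  rw [inner_chirpVec (hζ.norm'_eq_one (by have := hp.pos; omega)), norm_mul, mul_pow,
    hζ.norm_sq_sum_zpow_chirpExp hp ha, norm_inv, Complex.norm_natCast]
  have : (p : ℝ) ≠ 0 := by exact_mod_cast hp.ne_zero
  field_simp

theorem norm_inner_single_chirpVec_sq (hζ : ‖ζ‖ = 1) (a b : ℤ) (i : Fin p) :
    ‖inner ℂ (EuclideanSpace.single i 1) (chirpVec ζ p a b)‖ ^ 2 = 1 / p := by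
  rw [EuclideanSpace.inner_single_left, map_one, one_mul, norm_chirpVec_apply hζ, inv_pow,
    Real.sq_sqrt (Nat.cast_nonneg p), one_div]

noncomputable def IsPrimitiveRoot.chirpBasis (hζ : IsPrimitiveRoot ζ (2 * p)) (a : ℤ) :
    OrthonormalBasis (Fin p) ℂ (EuclideanSpace ℂ (Fin p)) :=
  .mk (hζ.orthonormal_chirpVec a)
    ((hζ.orthonormal_chirpVec a).linearIndependent.span_eq_top_of_card_eq_finrank' (by simp)).ge

@[simp] theorem IsPrimitiveRoot.chirpBasis_apply (hζ : IsPrimitiveRoot ζ (2 * p)) (a : ℤ)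
    (b : Fin p) : hζ.chirpBasis a b = chirpVec ζ p a b := by
  simp [chirpBasis]

theorem exists_mub_prime (p : ℕ) (hp : p.Prime) :
    ∃ B : Fin (p + 1) → OrthonormalBasis (Fin p) ℂ (EuclideanSpace ℂ (Fin p)),
      ∀ r s : Fin (p + 1), r ≠ s → ∀ i j : Fin p,
        ‖(inner ℂ (B r i) (B s j) : ℂ)‖ ^ 2 = 1 / p := by
  have h2p : 2 * p ≠ 0 := by have := hp.pos; omega
  have hζ := Complex.isPrimitiveRoot_exp (2 * p) h2p
  have hstd (a : Fin p) (i j : Fin p) :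
      ‖inner ℂ (EuclideanSpace.basisFun (Fin p) ℂ i) (hζ.chirpBasis a j)‖ ^ 2 = 1 / p := by
    simpa using norm_inner_single_chirpVec_sq (hζ.norm'_eq_one h2p) a j i
  refine ⟨Fin.cons (EuclideanSpace.basisFun (Fin p) ℂ) fun a => hζ.chirpBasis a, ?_⟩
  intro r s hrs i j
  cases r using Fin.cases with
  | zero =>
    cases s using Fin.cases with
    | zero => exact absurd rfl hrs
    | succ a => simpa using hstd a i j
  | succ a =>
    cases s using Fin.cases with
    | zero => simpa [norm_inner_symm] using hstd a j i
    | succ a' =>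
      have ha : ¬ (p : ℤ) ∣ (a' : ℤ) - a :=
        fun h => hrs (congrArg Fin.succ (Fin.natCast_dvd_val_sub_val_iff.mp h))
      simpa using hζ.norm_inner_chirpVec_sq hp ha i j
end

section
/- Let d ≥ 2 and suppose U : {0,…,d} × {0,…,d−1} → M_d(ℂ) is a family of d×d unitary matrices such that: (1) U(c,0) is the identity matrix for every class c; (2) within each class c, the matrices U(c,0), …, U(c,d−1) pairwise commute; (3) the d² matrices consisting of the identity together with all U(c,j) for j ≠ 0 are pairwise orthogonal in the Frobenius inner product, i.e. Tr[U(c,j)† U(c',j')] = 0 whenever (c,j) ≠ (c',j') with j, j' ≠ 0, and Tr[U(c,j)] = 0 for j ≠ 0. Then there exist d+1 orthonormal bases of ℂ^d that are mutually unbiased: any two vectors v, w from different bases satisfy |⟨v, w⟩|² = 1/d. -/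
/-!
Within a class the unitaries `U c j` commute, hence also commute with each other's adjoints, so
they share an orthonormal eigenbasis. Every `U c j` is a combination of the rank-one projections
`|v⟩⟨v|` onto its vectors; since the `d` matrices `U c j` are Frobenius-orthogonal, hence linearly
independent, conversely each `|v⟩⟨v|` lies in their span. For `w` in the eigenbasis of another
class `c'`, expand `|w⟩⟨w|` in the `U c' k`: as `|v⟩⟨v|` is orthogonal to every `U c' k` with
`k ≠ 0`, only the coefficient `Tr |w⟩⟨w| / d = 1 / d` of `U c' 0 = 1` survives in
`|⟨v, w⟩|² = Tr (|v⟩⟨v| |w⟩⟨w|)`.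
-/

open Matrix ComplexStarModule Module.End

theorem Commute.star_right_of_mem_unitary {R : Type*} [Monoid R] [StarMul R] {x u : R}
    (hu : u ∈ unitary R) (h : Commute x u) : Commute x (star u) :=
  Commute.units_inv_right (u := Unitary.toUnits ⟨u, hu⟩) h

section RealImaginaryPart

variable {A : Type*} [Ring A] [StarRing A] [Algebra ℂ A] [StarModule ℂ A] {x a : A}

theorem Commute.realPart_right (h : Commute x a) (h' : Commute x (star a)) :
    Commute x (ℜ a : A) := by
  rw [realPart_apply_coe]
  exact (h.add_right h').smul_right _

theorem Commute.imaginaryPart_right (h : Commute x a) (h' : Commute x (star a)) :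
    Commute x (ℑ a : A) := by
  rw [imaginaryPart_apply_coe]
  exact ((h.sub_right h').smul_right _).smul_right _

end RealImaginaryPart

theorem DirectSum.IsInternal.exists_orthonormalBasis_forall_exists_mem {𝕜 E ι : Type*}
    [RCLike 𝕜] [NormedAddCommGroup E] [InnerProductSpace 𝕜 E] [FiniteDimensional 𝕜 E]
    [DecidableEq ι] {V : ι → Submodule 𝕜 E} (hV : DirectSum.IsInternal V)
    (hV' : OrthogonalFamily 𝕜 (fun i ↦ V i) fun i ↦ (V i).subtypeₗᵢ) :
    ∃ b : OrthonormalBasis (Fin (Module.finrank 𝕜 E)) 𝕜 E, ∀ a, ∃ i, b a ∈ V i := by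
  let b := hV.collectedBasis fun i ↦ (stdOrthonormalBasis 𝕜 (V i)).toBasis
  let _ : Fintype _ := FiniteDimensional.fintypeBasisIndex b
  have hb : Orthonormal 𝕜 b := hV.collectedBasis_orthonormal hV' fun i ↦ by simp
  let e := Fintype.equivFinOfCardEq (Module.finrank_eq_card_basis b).symm
  refine ⟨(b.toOrthonormalBasis hb).reindex e, fun a ↦ ⟨(e.symm a).1, ?_⟩⟩
  rw [OrthonormalBasis.reindex_apply, Module.Basis.coe_toOrthonormalBasis]
  exact hV.collectedBasis_mem _ (e.symm a)

/-- The real and imaginary parts of the `T i` form a commuting family of self-adjoint operators,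
whose joint eigenspaces decompose `E` orthogonally. -/
theorem ContinuousLinearMap.exists_orthonormalBasis_forall_apply_eq_smul {E ι : Type*}
    [NormedAddCommGroup E] [InnerProductSpace ℂ E] [FiniteDimensional ℂ E] {T : ι → E →L[ℂ] E}
    (hT : ∀ i j, Commute (T i) (T j)) (hT' : ∀ i j, Commute (T i) (star (T j))) :
    ∃ b : OrthonormalBasis (Fin (Module.finrank ℂ E)) ℂ E, ∀ i a, ∃ μ : ℂ, T i (b a) = μ • b a := by
  classical
  let S : ι ⊕ ι → E →L[ℂ] E := Sum.elim (fun i ↦ ℜ (T i)) (fun i ↦ ℑ (T i))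
  have hS : ∀ k, IsSelfAdjoint (S k) := by
    rintro (i | i)
    exacts [(ℜ (T i)).2, (ℑ (T i)).2]
  have hTS : ∀ i k, Commute (T i) (S k) := by
    rintro i (j | j)
    exacts [(hT i j).realPart_right (hT' i j), (hT i j).imaginaryPart_right (hT' i j)]
  have hSS : ∀ k l, Commute (S k) (S l) := by
    intro k l
    have h i : Commute (S k) (T i) ∧ Commute (S k) (star (T i)) :=
      ⟨(hTS i k).symm, by simpa [(hS k).star_eq] using ((hTS i k).star_star).symm⟩
    rcases l with j | j
    exacts [(h j).1.realPart_right (h j).2, (h j).1.imaginaryPart_right (h j).2]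
  have hsymm : ∀ k, (S k : E →ₗ[ℂ] E).IsSymmetric :=
    fun k ↦ ContinuousLinearMap.isSelfAdjoint_iff_isSymmetric.mp (hS k)
  have hcomm : Pairwise fun k l ↦ Commute (S k : E →ₗ[ℂ] E) (S l) :=
    fun k l _ ↦ (hSS k l).map ContinuousLinearMap.toLinearMapRingHom
  obtain ⟨b, hb⟩ := (LinearMap.IsSymmetric.directSum_isInternal_of_pairwise_commute hsymm
    hcomm).exists_orthonormalBasis_forall_exists_mem
    (LinearMap.IsSymmetric.orthogonalFamily_iInf_eigenspaces hsymm)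
  refine ⟨b, fun i a ↦ ?_⟩
  obtain ⟨χ, hχ⟩ := hb a
  have hv : ∀ k, S k (b a) = χ k • b a := fun k ↦
    mem_eigenspace_iff.mp <| (Submodule.mem_iInf _).mp hχ k
  refine ⟨χ (.inl i) + Complex.I * χ (.inr i), ?_⟩
  calc T i (b a) = S (.inl i) (b a) + Complex.I • S (.inr i) (b a) := by
        conv_lhs => rw [← realPart_add_I_smul_imaginaryPart (T i)]
        rfl
    _ = _ := by rw [hv, hv, smul_smul, add_smul]

section Span

variable {ι : Type*} [Fintype ι]

theorem mem_span_range_of_forall_mul_eq_smul {R A : Type*} [CommSemiring R] [Semiring A]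
    [Module R A] {P : ι → A} (hP : ∑ a, P a = 1) {u : A} (hu : ∀ a, ∃ μ : R, u * P a = μ • P a) :
    u ∈ Submodule.span R (Set.range P) := by
  rw [← mul_one u, ← hP, Finset.mul_sum]
  refine Submodule.sum_mem _ fun a _ ↦ ?_
  obtain ⟨μ, h⟩ := hu a
  rw [h]
  exact Submodule.smul_mem _ _ (Submodule.subset_span ⟨a, rfl⟩)

theorem LinearIndependent.span_range_eq_of_forall_mem_span {K M κ : Type*} [DivisionRing K]
    [AddCommGroup M] [Module K M] [Fintype κ] {U : ι → M} {P : κ → M}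
    (hU : LinearIndependent K U) (hUP : ∀ i, U i ∈ Submodule.span K (Set.range P))
    (hcard : Fintype.card κ ≤ Fintype.card ι) :
    Submodule.span K (Set.range U) = Submodule.span K (Set.range P) := by
  have := FiniteDimensional.span_of_finite K (Set.finite_range P)
  refine Submodule.eq_of_le_of_finrank_le
    (Submodule.span_le.mpr (Set.range_subset_iff.mpr hUP)) ?_
  rw [finrank_span_eq_card hU]
  exact (finrank_range_le_card P).trans hcard

end Span

namespace Matrix

variable {n ι : Type*} [Fintype n]

section VecMulVec

variable {𝕜 : Type*} [RCLike 𝕜]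

theorem trace_vecMulVec_star_self (v : EuclideanSpace 𝕜 n) :
    trace (vecMulVec v (star v)) = (‖v‖ ^ 2 : 𝕜) := by
  rw [trace_vecMulVec, ← inner_self_eq_norm_sq_to_K]
  rfl

theorem trace_conjTranspose_vecMulVec_mul_vecMulVec (v w : EuclideanSpace 𝕜 n) :
    trace ((vecMulVec v (star v))ᴴ * vecMulVec w (star w)) = (‖(inner 𝕜 v w : 𝕜)‖ ^ 2 : 𝕜) := by
  rw [conjTranspose_vecMulVec, star_star, vecMulVec_mul_vecMulVec, trace_vecMulVec,
    dotProduct_smul, smul_eq_mul, ← RCLike.mul_conj, inner_conj_symm, dotProduct_comm]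
  rfl

theorem _root_.OrthonormalBasis.sum_vecMulVec_star_eq_one [Fintype ι] [DecidableEq n]
    (b : OrthonormalBasis ι 𝕜 (EuclideanSpace 𝕜 n)) :
    ∑ a, vecMulVec (b a) (star (b a)) = 1 := by
  have h := congrArg (fun T : EuclideanSpace 𝕜 n →L[𝕜] EuclideanSpace 𝕜 n ↦
    toEuclideanLin.symm (T : EuclideanSpace 𝕜 n →ₗ[𝕜] EuclideanSpace 𝕜 n)) b.sum_rankOne_eq_id
  simpa [ContinuousLinearMap.toLinearMap_sum, InnerProductSpace.symm_toEuclideanLin_rankOne]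
    using h

end VecMulVec

section TracePairing

variable {R : Type*} [CommSemiring R] [StarRing R] {X Y : Matrix n n R}

theorem linearIndependent_of_trace_mul {K : Type*} [Field K] {U Z : ι → Matrix n n K}
    (hne : ∀ i, trace (Z i * U i) ≠ 0) (hzero : Pairwise fun i j ↦ trace (Z i * U j) = 0) :
    LinearIndependent K U :=
  .of_pairwise_dual_eq_zero_one U
    (fun i ↦ (trace (Z i * U i))⁻¹ • (traceLinearMap n K K ∘ₗ LinearMap.mulLeft K (Z i)))
    (fun i j hij ↦ by simp [hzero hij]) (fun i ↦ by simp [hne i])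

theorem trace_conjTranspose_mul_eq_zero_of_mem_span {W : ι → Matrix n n R}
    (hX : X ∈ Submodule.span R (Set.range W)) (hW : ∀ j, trace ((W j)ᴴ * Y) = 0) :
    trace (Xᴴ * Y) = 0 := by
  induction hX using Submodule.span_induction with
  | mem _ h => obtain ⟨j, rfl⟩ := h; exact hW j
  | zero => simp
  | add _ _ _ _ h₁ h₂ => simp [add_mul, h₁, h₂]
  | smul c _ _ h => simp [h]

theorem trace_conjTranspose_mul_mul_card_eq_of_mem_span [Fintype ι] [DecidableEq n]
    {V : ι → Matrix n n R} {i₀ : ι} (hV₀ : V i₀ = 1) (hV : ∀ k ≠ i₀, trace (V k) = 0)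
    (hX : ∀ k ≠ i₀, trace (Xᴴ * V k) = 0) (hY : Y ∈ Submodule.span R (Set.range V)) :
    trace (Xᴴ * Y) * Fintype.card n = star (trace X) * trace Y := by
  obtain ⟨β, rfl⟩ := (Submodule.mem_span_range_iff_exists_fun R).mp hY
  simp only [Finset.mul_sum, trace_sum, Matrix.mul_smul, trace_smul, smul_eq_mul]
  rw [Finset.sum_eq_single i₀ (fun k _ hk ↦ by simp [hX k hk]) (by simp),
    Finset.sum_eq_single i₀ (fun k _ hk ↦ by simp [hV k hk]) (by simp),
    hV₀, mul_one, trace_one, trace_conjTranspose]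
  ring

end TracePairing

variable [DecidableEq n]

theorem exists_orthonormalBasis_forall_mulVec_eq_smul {U : ι → Matrix n n ℂ}
    (hU : ∀ i j, Commute (U i) (U j)) (hU' : ∀ i j, Commute (U i) (U j)ᴴ) :
    ∃ b : OrthonormalBasis n ℂ (EuclideanSpace ℂ n), ∀ i a, ∃ μ : ℂ, U i *ᵥ b a = μ • b a := by
  obtain ⟨b, hb⟩ := ContinuousLinearMap.exists_orthonormalBasis_forall_apply_eq_smul
    (T := fun i ↦ toEuclideanCLM (n := n) (𝕜 := ℂ) (U i)) (fun i j ↦ (hU i j).map _)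
    fun i j ↦ by
      simpa only [← star_eq_conjTranspose, map_star] using (hU' i j).map (toEuclideanCLM (𝕜 := ℂ))
  let e := Fintype.equivFinOfCardEq (finrank_euclideanSpace (𝕜 := ℂ) (ι := n)).symm
  refine ⟨b.reindex e.symm, fun i a ↦ ?_⟩
  obtain ⟨μ, h⟩ := hb i (e a)
  exact ⟨μ, by simpa using congrArg WithLp.ofLp h⟩

theorem exists_orthonormalBasis_vecMulVec_mem_span [Fintype ι] {U : ι → Matrix n n ℂ}
    (hU : ∀ i j, Commute (U i) (U j)) (hU' : ∀ i j, Commute (U i) (U j)ᴴ)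
    (hindep : LinearIndependent ℂ U) (hcard : Fintype.card n ≤ Fintype.card ι) :
    ∃ b : OrthonormalBasis n ℂ (EuclideanSpace ℂ n),
      ∀ a, vecMulVec (b a) (star (b a)) ∈ Submodule.span ℂ (Set.range U) := by
  obtain ⟨b, hb⟩ := exists_orthonormalBasis_forall_mulVec_eq_smul hU hU'
  have hUb : ∀ i, U i ∈ Submodule.span ℂ (Set.range fun a ↦ vecMulVec (b a) (star (b a))) :=
    fun i ↦ mem_span_range_of_forall_mul_eq_smul b.sum_vecMulVec_star_eq_one fun a ↦ by
      obtain ⟨μ, h⟩ := hb i a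
      exact ⟨μ, by rw [mul_vecMulVec, h, smul_vecMulVec]⟩
  refine ⟨b, fun a ↦ ?_⟩
  rw [hindep.span_range_eq_of_forall_mem_span hUb hcard]
  exact Submodule.subset_span ⟨a, rfl⟩

end Matrix

theorem mub_of_commuting_orthogonal_unitaries_general (d : ℕ) [NeZero d]
    (U : Fin (d + 1) → Fin d → Matrix (Fin d) (Fin d) ℂ)
    (hunitary : ∀ c j, (U c j)ᴴ * U c j = 1 ∧ U c j * (U c j)ᴴ = 1)
    (hid : ∀ c, U c 0 = 1)
    (hcomm : ∀ c j j', Commute (U c j) (U c j'))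
    (htraceless : ∀ c j, j ≠ 0 → Matrix.trace (U c j) = 0)
    (horth : ∀ c c' : Fin (d + 1), ∀ j j' : Fin d, j ≠ 0 → j' ≠ 0 →
      (c, j) ≠ (c', j') → Matrix.trace ((U c j)ᴴ * U c' j') = 0) :
    ∃ B : Fin (d + 1) → OrthonormalBasis (Fin d) ℂ (EuclideanSpace ℂ (Fin d)),
      ∀ r s : Fin (d + 1), r ≠ s → ∀ i j : Fin d,
        ‖(inner ℂ (B r i) (B s j) : ℂ)‖ ^ 2 = 1 / d := by
  have horth₀ : ∀ c c' j j', (c, j) ≠ (c', j') → j' ≠ 0 → trace ((U c j)ᴴ * U c' j') = 0 := by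
    intro c c' j j' hne hj'
    rcases eq_or_ne j 0 with rfl | hj
    · rw [hid, conjTranspose_one, one_mul, htraceless c' j' hj']
    · exact horth c c' j j' hj hj' hne
  have hindep : ∀ c, LinearIndependent ℂ (U c) := fun c ↦
    linearIndependent_of_trace_mul (Z := fun j ↦ (U c j)ᴴ)
      (fun j ↦ by simp [(hunitary c j).1, NeZero.ne d])
      (fun j j' hjj' ↦ by
        rcases eq_or_ne j' 0 with rfl | hj'
        · rw [hid, mul_one, trace_conjTranspose, htraceless c j hjj', star_zero]
        · exact horth₀ c c j j' (by simpa using hjj') hj')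
  choose B hB using fun c ↦ exists_orthonormalBasis_vecMulVec_mem_span (hcomm c)
    (fun j j' ↦ (hcomm c j j').star_right_of_mem_unitary (hunitary c j')) (hindep c) le_rfl
  refine ⟨B, fun r s hrs i j ↦ ?_⟩
  have htrace := trace_conjTranspose_mul_mul_card_eq_of_mem_span (hid s) (htraceless s)
    (fun k hk ↦ trace_conjTranspose_mul_eq_zero_of_mem_span (hB r i)
      fun j' ↦ horth₀ r s j' k (by simp [hrs]) hk) (hB s j)
  rw [trace_conjTranspose_vecMulVec_mul_vecMulVec, trace_vecMulVec_star_self,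
    trace_vecMulVec_star_self, (B r).orthonormal.1 i, (B s).orthonormal.1 j] at htrace
  rw [eq_div_iff (Nat.cast_ne_zero.mpr (NeZero.ne d))]
  apply RCLike.ofReal_injective (K := ℂ)
  simpa using htrace

theorem mub_of_commuting_orthogonal_unitaries (d : ℕ) [NeZero d] (hd : 2 ≤ d)
    (U : Fin (d + 1) → Fin d → Matrix (Fin d) (Fin d) ℂ)
    (hunitary : ∀ c j, (U c j)ᴴ * U c j = 1 ∧ U c j * (U c j)ᴴ = 1)
    (hid : ∀ c, U c 0 = 1)
    (hcomm : ∀ c j j', Commute (U c j) (U c j'))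
    (htraceless : ∀ c j, j ≠ 0 → Matrix.trace (U c j) = 0)
    (horth : ∀ c c' : Fin (d + 1), ∀ j j' : Fin d, j ≠ 0 → j' ≠ 0 →
      (c, j) ≠ (c', j') → Matrix.trace ((U c j)ᴴ * U c' j') = 0) :
    ∃ B : Fin (d + 1) → OrthonormalBasis (Fin d) ℂ (EuclideanSpace ℂ (Fin d)),
      ∀ r s : Fin (d + 1), r ≠ s → ∀ i j : Fin d,
        ‖(inner ℂ (B r i) (B s j) : ℂ)‖ ^ 2 = 1 / d :=
  mub_of_commuting_orthogonal_unitaries_general d U hunitary hid hcomm htraceless horth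
end

section
/- Let p be a prime and n ≥ 1, and let F = GF(p^n) be the finite field with p^n elements, regarded as an algebra over Z_p. Then there exists a Z_p-linear bijection M : F × F → Z_p^{2n} such that for all u₁, u₂ ∈ F × F, σ(M(u₁), M(u₂)) = Tr_{F/Z_p}(u₁ ∘ u₂), where Tr_{F/Z_p} is the field trace of F over Z_p. -/
/-!
The trace form `(x, y) ↦ Tr(x y)` of the separable extension `F / 𝔽_p` is nondegenerate, so every
basis `b` of `F` has a trace-dual basis `c`, and `Tr(x y) = ∑ⱼ cⱼ(x) bⱼ(y)` in the coordinates
`bⱼ`, `cⱼ` of these bases. Reading off `(α, β)` as the pairs `(bⱼ(α), cⱼ(β))` therefore turns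
`Tr(β α' - α β')` into the standard symplectic form on `𝔽_p^{2n}`.
-/

@[simps]
def LinearEquiv.arrowProdEquivProdArrow (R ι M N : Type*) [Semiring R] [AddCommMonoid M]
    [AddCommMonoid N] [Module R M] [Module R N] :
    (ι → M × N) ≃ₗ[R] (ι → M) × (ι → N) :=
  { Equiv.arrowProdEquivProdArrow ι _ _ with
    map_add' := fun _ _ => rfl
    map_smul' := fun _ _ => rfl }

namespace LinearMap.BilinForm

variable {K V ι : Type*} [Field K] [AddCommGroup V] [Module K V] [Fintype ι] [DecidableEq ι]
  {B : LinearMap.BilinForm K V}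

theorem sum_dualBasis_repr_mul_repr (hB : B.Nondegenerate) (b : Module.Basis ι K V) (x y : V) :
    ∑ i, (B.dualBasis hB b).repr x i * b.repr y i = B x y := by
  conv_rhs => rw [← b.sum_repr y]
  simp only [dualBasis_repr_apply, map_sum, map_smul, smul_eq_mul, mul_comm]

theorem exists_linearEquiv_symplectic (hB : B.Nondegenerate) (b : Module.Basis ι K V) :
    ∃ M : (V × V) ≃ₗ[K] (ι → K × K), ∀ u₁ u₂ : V × V,
      ∑ i, ((M u₁ i).2 * (M u₂ i).1 - (M u₁ i).1 * (M u₂ i).2) = B u₁.2 u₂.1 - B u₂.2 u₁.1 := by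
  refine ⟨(b.equivFun.prodCongr (B.dualBasis hB b).equivFun).trans
    (LinearEquiv.arrowProdEquivProdArrow K ι K K).symm, fun u₁ u₂ => ?_⟩
  rw [Finset.sum_sub_distrib, ← sum_dualBasis_repr_mul_repr hB b u₁.2 u₂.1,
    ← sum_dualBasis_repr_mul_repr hB b u₂.2 u₁.1]
  simp [mul_comm]

end LinearMap.BilinForm

theorem exists_symplectic_linear_bijection_general (p n : ℕ) [Fact p.Prime]
    (F : Type*) [Field F] [Fintype F] [Algebra (ZMod p) F]
    (hF : Fintype.card F = p ^ n) :
    ∃ M : (F × F) ≃ₗ[ZMod p] (Fin n → ZMod p × ZMod p),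
      ∀ u₁ u₂ : F × F,
        (∑ j : Fin n, ((M u₁ j).2 * (M u₂ j).1 - (M u₁ j).1 * (M u₂ j).2)) =
          Algebra.trace (ZMod p) F (u₁.2 * u₂.1 - u₁.1 * u₂.2) := by
  have hrank : Module.finrank (ZMod p) F = n :=
    Nat.pow_right_injective (Fact.out : p.Prime).two_le
      ((FiniteField.pow_finrank_eq_card p F).trans hF)
  obtain ⟨M, hM⟩ := LinearMap.BilinForm.exists_linearEquiv_symplectic
    (traceForm_nondegenerate (ZMod p) F) (Module.finBasisOfFinrankEq (ZMod p) F hrank)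
  exact ⟨M, fun u₁ u₂ => by simp only [hM, Algebra.traceForm_apply, map_sub, mul_comm u₁.1]⟩

theorem exists_symplectic_linear_bijection (p n : ℕ) [Fact p.Prime] (hn : 1 ≤ n)
    (F : Type*) [Field F] [Fintype F] [Algebra (ZMod p) F]
    (hF : Fintype.card F = p ^ n) :
    ∃ M : (F × F) ≃ₗ[ZMod p] (Fin n → ZMod p × ZMod p),
      ∀ u₁ u₂ : F × F,
        (∑ j : Fin n, ((M u₁ j).2 * (M u₂ j).1 - (M u₁ j).1 * (M u₂ j).2)) =
          Algebra.trace (ZMod p) F (u₁.2 * u₂.1 - u₁.1 * u₂.2) :=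
  exists_symplectic_linear_bijection_general p n F hF
end
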